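/- arXiv:1311.4404 — 12 statements merged into one kernel-verified Lean document; each statement's English description precedes it below -/
import Mathlib

section
/- For all real numbers a, b, c, the inequality a⁴ + b⁴ + c⁴ ≥ 4abc − 1 holds. -/
theorem four_mul_mul_mul_sub_one_le_pow_four_add {R : Type*} [CommRing R] [LinearOrder R]
    [IsStrictOrderedRing R] (a b c : R) : 4 * a * b * c - 1 ≤ a ^ 4 + b ^ 4 + c ^ 4 := by
  have sos : a ^ 4 + b ^ 4 + c ^ 4 - (4 * a * b * c - 1)
      = (a ^ 2 - b ^ 2) ^ 2 + (c ^ 2 - 1) ^ 2 + 2 * (a * b - c) ^ 2 := by ring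
  have : 0 ≤ (a ^ 2 - b ^ 2) ^ 2 + (c ^ 2 - 1) ^ 2 + 2 * (a * b - c) ^ 2 := by positivity
  linarith

theorem stmt_0 (a b c : ℝ) : a^4 + b^4 + c^4 ≥ 4*a*b*c - 1 :=
  four_mul_mul_mul_sub_one_le_pow_four_add a b c
end

section
/- If a, b, c, d are positive real numbers with a + b + c + d = 4, then a/(a³ + 8) + b/(b³ + 8) + c/(c³ + 8) + d/(d³ + 8) ≤ 4/9. -/
/-! Tangent line trick: on `x > -2` the function `x / (x³ + 8)` lies below its tangent line
`(2x + 1) / 27` at `x = 1`, and summing the four tangent bounds under `a + b + c + d = 4`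
gives exactly `4 / 9`. -/

lemma div_cube_add_eight_le_tangent {x : ℝ} (hx : -2 < x) :
    x / (x ^ 3 + 8) ≤ (2 * x + 1) / 27 := by
  have hden : 0 < x ^ 3 + 8 := by nlinarith [sq_nonneg (x - 1)]
  -- `(2x + 1)(x³ + 8) - 27x = (x - 1)²(2x² + 5x + 8)`, and `8(2x² + 5x + 8) = (4x + 5)² + 39`.
  have hgap : 0 ≤ (x - 1) ^ 2 * (2 * x ^ 2 + 5 * x + 8) :=
    mul_nonneg (sq_nonneg _) (by nlinarith [sq_nonneg (4 * x + 5)])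
  rw [div_le_div_iff₀ hden (by norm_num)]
  nlinarith [hgap]

theorem stmt_4 (a b c d : ℝ) (ha : 0 < a) (hb : 0 < b) (hc : 0 < c) (hd : 0 < d)
    (hsum : a + b + c + d = 4) :
    a / (a^3 + 8) + b / (b^3 + 8) + c / (c^3 + 8) + d / (d^3 + 8) ≤ 4 / 9 := by
  have := div_cube_add_eight_le_tangent (x := a) (by linarith)
  have := div_cube_add_eight_le_tangent (x := b) (by linarith)
  have := div_cube_add_eight_le_tangent (x := c) (by linarith)
  have := div_cube_add_eight_le_tangent (x := d) (by linarith)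
  linarith
end

section
/- If a, b, c are positive real numbers with a² + b² + c² = 3, then 1/(a³ + 2) + 1/(b³ + 2) + 1/(c³ + 2) ≥ 1. -/
/-! Tangent line trick: for `x ≥ 0`, `1 / (x³ + 2) ≥ (3 - x²) / 6`, with equality at `x = 1`,
because `6 - (3 - x²)(x³ + 2) = x²(x - 1)²(x + 2)`. Summing over `a, b, c` and using
`a² + b² + c² = 3` gives the bound. -/

lemma three_sub_sq_div_six_le_one_div_cube_add_two {x : ℝ} (hx : 0 ≤ x) :
    (3 - x ^ 2) / 6 ≤ 1 / (x ^ 3 + 2) := by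
  rw [div_le_div_iff₀ (by norm_num) (by positivity)]
  nlinarith [mul_nonneg (mul_nonneg (sq_nonneg x) (sq_nonneg (x - 1))) (by linarith : 0 ≤ x + 2)]

theorem stmt_6 (a b c : ℝ) (ha : 0 < a) (hb : 0 < b) (hc : 0 < c)
    (hsum : a^2 + b^2 + c^2 = 3) :
    1 / (a^3 + 2) + 1 / (b^3 + 2) + 1 / (c^3 + 2) ≥ 1 := by
  have hA := three_sub_sq_div_six_le_one_div_cube_add_two ha.le
  have hB := three_sub_sq_div_six_le_one_div_cube_add_two hb.le
  have hC := three_sub_sq_div_six_le_one_div_cube_add_two hc.le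
  linarith
end

section
/- If a, b, c, d, e are nonnegative real numbers with 1/(4+a) + 1/(4+b) + 1/(4+c) + 1/(4+d) + 1/(4+e) = 1, then a/(4+a²) + b/(4+b²) + c/(4+c²) + d/(4+d²) + e/(4+e²) ≤ 1. -/
/-! Tangent line trick: for `x ≥ -1`, `x / (4 + x²) ≤ 4/5 - 3/(4 + x)`, with equality at `x = 1`
(the equality case of the theorem). Summing over the five variables and using the constraint
`∑ 1/(4 + x) = 1` gives `≤ 5 · 4/5 - 3 = 1`. -/

lemma div_four_add_sq_le_tangent (x : ℝ) (hx : -1 ≤ x) :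
    x / (4 + x ^ 2) ≤ 4 / 5 - 3 / (4 + x) := by
  have hx4 : 0 < 4 + x := by linarith
  rw [div_le_iff₀ (by positivity), ← sub_nonneg]
  have gap : (4 / 5 - 3 / (4 + x)) * (4 + x ^ 2) - x = 4 * (x - 1) ^ 2 * (x + 1) / (5 * (4 + x)) := by
    field_simp
    ring
  rw [gap]
  have : 0 ≤ x + 1 := by linarith
  positivity

theorem stmt_8 (a b c d e : ℝ) (ha : 0 ≤ a) (hb : 0 ≤ b) (hc : 0 ≤ c) (hd : 0 ≤ d) (he : 0 ≤ e)
    (hsum : 1/(4+a) + 1/(4+b) + 1/(4+c) + 1/(4+d) + 1/(4+e) = 1) :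
    a/(4+a^2) + b/(4+b^2) + c/(4+c^2) + d/(4+d^2) + e/(4+e^2) ≤ 1 := by
  linear_combination div_four_add_sq_le_tangent a (by linarith) + div_four_add_sq_le_tangent b (by linarith)
    + div_four_add_sq_le_tangent c (by linarith) + div_four_add_sq_le_tangent d (by linarith)
    + div_four_add_sq_le_tangent e (by linarith) - 3 * hsum
end

section
/- If a, b, c are positive real numbers with a + b + c = 1, then 10(a³ + b³ + c³) − 9(a⁵ + b⁵ + c⁵) ≥ 1. -/
/-! With `p = a + b + c = 1`, `q = ab + bc + ca`, `r = abc`, the left side minus `1` equals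
`15 (q - r)(1 - 3q) = 15 (a + b)(b + c)(c + a) · ½((a - b)² + (b - c)² + (c - a)²)`,
a product of nonnegative factors. -/

theorem ten_sum_cubes_sub_nine_sum_fifth_powers {R : Type*} [CommRing R] (a b c : R) :
    10 * (a + b + c) ^ 2 * (a ^ 3 + b ^ 3 + c ^ 3) - 9 * (a ^ 5 + b ^ 5 + c ^ 5) - (a + b + c) ^ 5
      = 15 * ((a + b) * (b + c) * (c + a)) * (a ^ 2 + b ^ 2 + c ^ 2 - a * b - b * c - c * a) := by
  ring

theorem stmt_10 (a b c : ℝ) (ha : 0 < a) (hb : 0 < b) (hc : 0 < c)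
    (hsum : a + b + c = 1) :
    10*(a^3 + b^3 + c^3) - 9*(a^5 + b^5 + c^5) ≥ 1 := by
  have key := ten_sum_cubes_sub_nine_sum_fifth_powers a b c
  rw [hsum] at key
  have hprod : 0 ≤ (a + b) * (b + c) * (c + a) := by positivity
  have hsq : 0 ≤ a ^ 2 + b ^ 2 + c ^ 2 - a * b - b * c - c * a := by
    nlinarith [sq_nonneg (a - b), sq_nonneg (b - c), sq_nonneg (c - a)]
  linarith [mul_nonneg (mul_nonneg (by norm_num : (0 : ℝ) ≤ 15) hprod) hsq]
end

section
/- For every real number x with 0 < x < 0.9, the inequality 10x³ − 9x⁵ ≥ (25/9)x − 16/27 holds. -/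
/-! The gap between `10x³ - 9x⁵` and its tangent line at `1/3` has a double root at `1/3`,
so it factors as `(x - 1/3)² q(x)` with the cubic `q x = -9x³ - 6x² + 7x + 16/3`. Writing
`t = 9/10 - x`, one finds `q x = t (9 (t - 101/60)² + 67/400) + 637/3000`, which is positive
for `t ≥ 0`. -/

lemma tangent_gap_eq_sq_mul (x : ℝ) :
    10*x^3 - 9*x^5 - ((25/9)*x - 16/27) = (x - 1/3)^2 * (-9*x^3 - 6*x^2 + 7*x + 16/3) := by
  ring

lemma cubic_cofactor_pos {x : ℝ} (hx : x ≤ 9/10) : 0 < -9*x^3 - 6*x^2 + 7*x + 16/3 := by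
  have ht : 0 ≤ 9/10 - x := by linarith
  have hq : -9*x^3 - 6*x^2 + 7*x + 16/3
      = (9/10 - x) * (9*(9/10 - x - 101/60)^2 + 67/400) + 637/3000 := by ring
  rw [hq]
  exact add_pos_of_nonneg_of_pos (mul_nonneg ht (by positivity)) (by norm_num)

theorem stmt_11_general (x : ℝ) (hx' : x < 0.9) :
    10*x^3 - 9*x^5 ≥ (25/9)*x - 16/27 := by
  rw [ge_iff_le, ← sub_nonneg, tangent_gap_eq_sq_mul]
  exact mul_nonneg (sq_nonneg _) (cubic_cofactor_pos (by norm_num at hx'; linarith)).le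

theorem stmt_11 (x : ℝ) (hx : 0 < x) (hx' : x < 0.9) :
    10*x^3 - 9*x^5 ≥ (25/9)*x - 16/27 :=
  stmt_11_general x hx'
end

section
/- If a, b, c are positive real numbers with a² + b² + c² = 12, then a·(b² + c²)^(1/3) + b·(c² + a²)^(1/3) + c·(a² + b²)^(1/3) ≤ 12, with equality when a = b = c = 2; hence the maximum of this expression under the constraint is 12. -/
/-!
Each cube root is bounded by its tangent line at `8`, `t ^ (1/3) ≤ (t + 16) / 12` (AM–GM for
`t, 8, 8`). Since `b² + c² = 12 - a²`, the term `a (b² + c²) ^ (1/3)` is then at most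
`a (28 - a²) / 12 ≤ 4 + (a² - 4) / 3`, the last step being `(a - 2)² (a + 8) ≥ 0`.
Summing over the three terms and using `a² + b² + c² = 12` gives `12`, attained at `a = b = c = 2`.
-/

open Real

lemma rpow_one_third_le_tangent {m t : ℝ} (hm : 0 < m) (ht : 0 ≤ t) :
    t ^ ((1:ℝ)/3) ≤ (t + 2 * m ^ 3) / (3 * m ^ 2) := by
  set r := t ^ ((1:ℝ)/3) with hr
  have hr_nonneg : 0 ≤ r := rpow_nonneg ht _
  have hr_cube : r ^ 3 = t := by
    rw [hr, one_div]
    exact_mod_cast rpow_inv_natCast_pow ht three_ne_zero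
  rw [le_div_iff₀ (by positivity), ← hr_cube]
  nlinarith [mul_nonneg (sq_nonneg (r - m)) (by positivity : 0 ≤ r + 2 * m)]

lemma mul_rpow_one_third_le {a s : ℝ} (ha : 0 ≤ a) (hs : 0 ≤ s) (h : a ^ 2 + s = 12) :
    a * s ^ ((1:ℝ)/3) ≤ 4 + (a ^ 2 - 4) / 3 := by
  have hroot : s ^ ((1:ℝ)/3) ≤ (s + 16) / 12 := by
    convert rpow_one_third_le_tangent two_pos hs using 2 <;> norm_num
  calc a * s ^ ((1:ℝ)/3) ≤ a * ((s + 16) / 12) := mul_le_mul_of_nonneg_left hroot ha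
    _ = a * (28 - a ^ 2) / 12 := by rw [show s = 12 - a ^ 2 by linarith]; ring
    _ ≤ 4 + (a ^ 2 - 4) / 3 := by nlinarith [mul_nonneg (sq_nonneg (a - 2)) ha]

lemma cyclic_sum_le_twelve {a b c : ℝ} (ha : 0 ≤ a) (hb : 0 ≤ b) (hc : 0 ≤ c)
    (h : a ^ 2 + b ^ 2 + c ^ 2 = 12) :
    a * (b ^ 2 + c ^ 2) ^ ((1:ℝ)/3) + b * (c ^ 2 + a ^ 2) ^ ((1:ℝ)/3) +
      c * (a ^ 2 + b ^ 2) ^ ((1:ℝ)/3) ≤ 12 := by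
  have hA := mul_rpow_one_third_le ha (by positivity) (s := b ^ 2 + c ^ 2) (by linarith)
  have hB := mul_rpow_one_third_le hb (by positivity) (s := c ^ 2 + a ^ 2) (by linarith)
  have hC := mul_rpow_one_third_le hc (by positivity) (s := a ^ 2 + b ^ 2) (by linarith)
  linarith

lemma eight_rpow_one_third : (8:ℝ) ^ ((1:ℝ)/3) = 2 := by
  rw [show (8:ℝ) = 2 ^ 3 by norm_num, one_div]
  exact_mod_cast pow_rpow_inv_natCast zero_le_two three_ne_zero

theorem stmt_13 :
    (∀ a b c : ℝ, 0 < a → 0 < b → 0 < c → a^2 + b^2 + c^2 = 12 →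
      a * (b^2 + c^2) ^ ((1:ℝ)/3) + b * (c^2 + a^2) ^ ((1:ℝ)/3) +
        c * (a^2 + b^2) ^ ((1:ℝ)/3) ≤ 12) ∧
    ((2:ℝ) * (2^2 + 2^2 : ℝ) ^ ((1:ℝ)/3) + 2 * (2^2 + 2^2 : ℝ) ^ ((1:ℝ)/3) +
        2 * (2^2 + 2^2 : ℝ) ^ ((1:ℝ)/3) = 12) ∧
    IsGreatest {A : ℝ | ∃ a b c : ℝ, 0 < a ∧ 0 < b ∧ 0 < c ∧ a^2 + b^2 + c^2 = 12 ∧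
      A = a * (b^2 + c^2) ^ ((1:ℝ)/3) + b * (c^2 + a^2) ^ ((1:ℝ)/3) +
        c * (a^2 + b^2) ^ ((1:ℝ)/3)} 12 := by
  have bound : ∀ a b c : ℝ, 0 < a → 0 < b → 0 < c → a^2 + b^2 + c^2 = 12 →
      a * (b^2 + c^2) ^ ((1:ℝ)/3) + b * (c^2 + a^2) ^ ((1:ℝ)/3) +
        c * (a^2 + b^2) ^ ((1:ℝ)/3) ≤ 12 :=
    fun a b c ha hb hc h => cyclic_sum_le_twelve ha.le hb.le hc.le h
  have equality : (2:ℝ) * (2^2 + 2^2 : ℝ) ^ ((1:ℝ)/3) + 2 * (2^2 + 2^2 : ℝ) ^ ((1:ℝ)/3) +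
      2 * (2^2 + 2^2 : ℝ) ^ ((1:ℝ)/3) = 12 := by
    norm_num [eight_rpow_one_third]
  refine ⟨bound, equality, ⟨2, 2, 2, two_pos, two_pos, two_pos, by norm_num, equality.symm⟩, ?_⟩
  rintro A ⟨a, b, c, ha, hb, hc, h, rfl⟩
  exact bound a b c ha hb hc h
end

section
/- For every positive integer n and all nonnegative real numbers x₁, …, xₙ with x₁ + ⋯ + xₙ = 1, the inequality Σ_{k=1}^{n} x_k(1 − x_k)² ≤ (1 − 1/n)² holds. -/
/-! Tangent line trick: on `t ≤ 2 - 2u` the cubic `t (1 - t)²` lies below its tangent at `u`,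
the gap being `(t - u)² (2 - 2u - t)`. Taking `u = 1/n` (so that `t ≤ 1` suffices once `n ≥ 2`) and
summing, the linear terms cancel because `∑ xₖ = 1 = n u`. -/

open Finset

lemma mul_one_sub_sq_le_tangent {t u : ℝ} (h : t + 2 * u ≤ 2) :
    t * (1 - t) ^ 2 ≤ u * (1 - u) ^ 2 + (1 - 4 * u + 3 * u ^ 2) * (t - u) := by
  have gap : 0 ≤ (t - u) ^ 2 * (2 - 2 * u - t) := mul_nonneg (sq_nonneg _) (by linarith)
  linarith [gap]

lemma sum_mul_one_sub_sq_le {ι : Type*} [Fintype ι] (hcard : 2 ≤ Fintype.card ι)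
    (x : ι → ℝ) (hx : ∀ k, 0 ≤ x k) (hsum : ∑ k, x k = 1) :
    ∑ k, x k * (1 - x k) ^ 2 ≤ (1 - 1 / (Fintype.card ι : ℝ)) ^ 2 := by
  have hN : (2 : ℝ) ≤ Fintype.card ι := by exact_mod_cast hcard
  set N : ℝ := (Fintype.card ι : ℝ)
  set u := 1 / N
  have hNu : N * u = 1 := mul_one_div_cancel (by positivity)
  have hu : u ≤ 1 / 2 := one_div_le_one_div_of_le two_pos hN
  have hx_le_one : ∀ k, x k ≤ 1 := fun k =>
    hsum ▸ single_le_sum (fun i _ => hx i) (mem_univ k)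
  calc ∑ k, x k * (1 - x k) ^ 2
      ≤ ∑ k, (u * (1 - u) ^ 2 + (1 - 4 * u + 3 * u ^ 2) * (x k - u)) :=
        sum_le_sum fun k _ => mul_one_sub_sq_le_tangent (by linarith [hx_le_one k])
    _ = N * u * (1 - u) ^ 2 + (1 - 4 * u + 3 * u ^ 2) * (1 - N * u) := by
        simp only [sum_add_distrib, ← mul_sum, sum_sub_distrib, hsum, sum_const, card_univ,
          nsmul_eq_mul]
        ring
    _ = (1 - u) ^ 2 := by rw [hNu]; ring

theorem stmt_14_general (n : ℕ) (x : Fin n → ℝ) (hx : ∀ k, 0 ≤ x k)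
    (hsum : ∑ k, x k = 1) :
    ∑ k, x k * (1 - x k)^2 ≤ (1 - 1/(n:ℝ))^2 := by
  match n, x, hx, hsum with
  | 0, _, _, hsum => simp at hsum
  | 1, x, _, hsum =>
    have hx0 : x 0 = 1 := by simpa using hsum
    simp [hx0]
  | n + 2, x, hx, hsum =>
    simpa using sum_mul_one_sub_sq_le (by simp) x hx hsum

theorem stmt_14 (n : ℕ) (hn : 0 < n) (x : Fin n → ℝ) (hx : ∀ k, 0 ≤ x k)
    (hsum : ∑ k, x k = 1) :
    ∑ k, x k * (1 - x k)^2 ≤ (1 - 1/(n:ℝ))^2 :=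
  stmt_14_general n x hx hsum
end

section
/- Let α be a nonzero real number, x₀ a positive real number, and n ≥ 2 a natural number. Let f be a function defined on the positive reals and differentiable at x₀. Suppose (α − 1)·f'(x₀) ≤ 0 and for every positive real x with x^α < n·x₀^α one has f(x) ≥ f(x₀) + f'(x₀)(x − x₀). Then for all positive reals x₁, …, xₙ with x₁^α + ⋯ + xₙ^α = n·x₀^α, one has f(x₁) + ⋯ + f(xₙ) ≥ n·f(x₀). -/
/-!
Summing the supporting line at `x₀` over the `xⱼ` gives
`∑ f (xⱼ) ≥ n f(x₀) + f'(x₀) (∑ xⱼ - n x₀)`, and it remains to see that the last term is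
nonnegative. By Bernoulli's inequality, `t ^ α - 1 - α (t - 1)` has the sign of `α (α - 1)`;
summing it over `tⱼ = xⱼ / x₀` and using the constraint shows that the arithmetic mean of the
`xⱼ` lies below `x₀ = c_α(x)` when `α > 1` and above it when `α < 1`, which is exactly the sign
that `(α - 1) f'(x₀) ≤ 0` requires. The supporting line may be used at every `xⱼ` because
`n ≥ 2` forces `xⱼ ^ α < n x₀ ^ α`.
-/

open Finset

namespace Real

lemma one_add_mul_sub_one_le_rpow_of_nonpos {t p : ℝ} (ht : 0 < t) (hp : p ≤ 0) :
    1 + p * (t - 1) ≤ t ^ p := by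
  have hexp : p * log t + 1 ≤ t ^ p := by
    rw [rpow_def_of_pos ht, mul_comm p]
    exact add_one_le_exp _
  have hlog : p * (t - 1) ≤ p * log t :=
    mul_le_mul_of_nonpos_left (log_le_sub_one_of_pos ht) hp
  linarith

lemma mul_sub_one_mul_rpow_sub_tangent_nonneg {t : ℝ} (ht : 0 < t) (p : ℝ) :
    0 ≤ p * (p - 1) * (t ^ p - (1 + p * (t - 1))) := by
  have hs : -1 ≤ t - 1 := by linarith
  have hts : 1 + (t - 1) = t := by ring
  rcases le_total p 0 with hp | hp
  · exact mul_nonneg (mul_nonneg_of_nonpos_of_nonpos hp (by linarith))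
      (sub_nonneg.2 (one_add_mul_sub_one_le_rpow_of_nonpos ht hp))
  rcases le_total p 1 with hp1 | hp1
  · refine mul_nonneg_of_nonpos_of_nonpos (mul_nonpos_of_nonneg_of_nonpos hp (by linarith)) ?_
    have := rpow_one_add_le_one_add_mul_self hs hp hp1
    rw [hts] at this
    linarith
  · refine mul_nonneg (mul_nonneg hp (by linarith)) ?_
    have := one_add_mul_self_le_rpow_one_add hs hp1
    rw [hts] at this
    linarith

variable {ι : Type*} [Fintype ι]

lemma sub_one_mul_sum_sub_card_mul_nonpos {p a : ℝ} (hp : p ≠ 0) (ha : 0 < a) {x : ι → ℝ}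
    (hx : ∀ i, 0 < x i) (hmean : ∑ i, x i ^ p = Fintype.card ι * a ^ p) :
    (p - 1) * (∑ i, x i - Fintype.card ι * a) ≤ 0 := by
  set N : ℝ := (Fintype.card ι : ℝ)
  have hsum_rpow : ∑ i, (x i / a) ^ p = N := by
    simp_rw [div_rpow (hx _).le ha.le, ← sum_div, hmean]
    field_simp [(rpow_pos_of_pos ha p).ne']
  have hsum_tangent :
      ∑ i, (1 + p * (x i / a - 1)) = N + p * ((∑ i, x i - N * a) / a) := by
    simp only [sum_add_distrib, ← mul_sum, sum_sub_distrib, ← sum_div, sum_const, card_univ,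
      nsmul_eq_mul, mul_one, N]
    field_simp
  have hbernoulli : 0 ≤ p * (p - 1) * (∑ i, (x i / a) ^ p - ∑ i, (1 + p * (x i / a - 1))) := by
    rw [← sum_sub_distrib, mul_sum]
    exact sum_nonneg fun i _ ↦ mul_sub_one_mul_rpow_sub_tangent_nonneg (div_pos (hx i) ha) p
  rw [hsum_rpow, hsum_tangent] at hbernoulli
  have hfactor : 0 < p ^ 2 / a := div_pos (sq_pos_of_ne_zero hp) ha
  have hscaled : p ^ 2 / a * ((p - 1) * (∑ i, x i - N * a)) ≤ 0 := by
    have h : p * (p - 1) * (N - (N + p * ((∑ i, x i - N * a) / a)))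
        = -(p ^ 2 / a * ((p - 1) * (∑ i, x i - N * a))) := by ring
    linarith
  exact nonpos_of_mul_nonpos_right hscaled hfactor

end Real

lemma card_mul_add_mul_sum_sub_le_sum {ι : Type*} [Fintype ι] (f : ℝ → ℝ) (a m : ℝ)
    (x : ι → ℝ) (h : ∀ i, f a + m * (x i - a) ≤ f (x i)) :
    Fintype.card ι * f a + m * (∑ i, x i - Fintype.card ι * a) ≤ ∑ i, f (x i) := by
  calc Fintype.card ι * f a + m * (∑ i, x i - Fintype.card ι * a)
      = ∑ i, (f a + m * (x i - a)) := by
        simp only [sum_add_distrib, ← mul_sum, sum_sub_distrib, sum_const, card_univ,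
          nsmul_eq_mul]
    _ ≤ ∑ i, f (x i) := sum_le_sum fun i _ ↦ h i

theorem stmt_15_general (α : ℝ) (hα : α ≠ 0) (x₀ : ℝ) (hx₀ : 0 < x₀) (n : ℕ) (hn : 2 ≤ n)
    (f : ℝ → ℝ) (f' : ℝ)
    (hsign : (α - 1) * f' ≤ 0)
    (htangent : ∀ x : ℝ, 0 < x → x ^ α < n * x₀ ^ α → f x ≥ f x₀ + f' * (x - x₀))
    (x : Fin n → ℝ) (hx : ∀ j, 0 < x j)
    (hconstraint : ∑ j, x j ^ α = n * x₀ ^ α) :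
    ∑ j, f (x j) ≥ n * f x₀ := by
  have hterm_lt : ∀ j, x j ^ α < n * x₀ ^ α := by
    intro j
    have : Nontrivial (Fin n) := Fin.nontrivial_iff_two_le.2 hn
    obtain ⟨k, hkj⟩ := exists_ne j
    rw [← hconstraint]
    exact single_lt_sum hkj (mem_univ j) (mem_univ k) (Real.rpow_pos_of_pos (hx k) α)
      fun m _ _ ↦ (Real.rpow_pos_of_pos (hx m) α).le
  have hsupport := card_mul_add_mul_sum_sub_le_sum f x₀ f' x
    fun j ↦ htangent _ (hx j) (hterm_lt j)
  have hslope : 0 ≤ f' * (∑ j, x j - n * x₀) := by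
    rcases eq_or_ne α 1 with rfl | hα1
    · simp only [Real.rpow_one] at hconstraint
      rw [hconstraint, sub_self, mul_zero]
    have hmean := Real.sub_one_mul_sum_sub_card_mul_nonpos hα hx₀ hx
      (by rwa [Fintype.card_fin])
    rw [Fintype.card_fin] at hmean
    have : 0 ≤ (α - 1) ^ 2 * (f' * (∑ j, x j - n * x₀)) := by nlinarith
    exact nonneg_of_mul_nonneg_right this (sq_pos_of_ne_zero (sub_ne_zero.2 hα1))
  rw [Fintype.card_fin] at hsupport
  linarith

theorem stmt_15 (α : ℝ) (hα : α ≠ 0) (x₀ : ℝ) (hx₀ : 0 < x₀) (n : ℕ) (hn : 2 ≤ n)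
    (f : ℝ → ℝ) (f' : ℝ) (hf : HasDerivAt f f' x₀)
    (hsign : (α - 1) * f' ≤ 0)
    (htangent : ∀ x : ℝ, 0 < x → x ^ α < n * x₀ ^ α → f x ≥ f x₀ + f' * (x - x₀))
    (x : Fin n → ℝ) (hx : ∀ j, 0 < x j)
    (hconstraint : ∑ j, x j ^ α = n * x₀ ^ α) :
    ∑ j, f (x j) ≥ n * f x₀ :=
  stmt_15_general α hα x₀ hx₀ n hn f f' hsign htangent x hx hconstraint
end

section
/- Let x₀ be a positive real number and n ≥ 2 a natural number. Let f be a function defined on the positive reals and differentiable at x₀. Suppose f'(x₀) ≥ 0 and, for every positive real x, one has f(x) ≥ f(x₀) + f'(x₀)(x − x₀). Then for all positive reals x₁, …, xₙ with x₁·x₂·⋯·xₙ = x₀ⁿ, one has f(x₁) + ⋯ + f(xₙ) ≥ n·f(x₀). -/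
theorem stmt_16 (x₀ : ℝ) (hx₀ : 0 < x₀) (n : ℕ) (hn : 2 ≤ n)
    (f : ℝ → ℝ) (f' : ℝ) (hf : HasDerivAt f f' x₀)
    (hsign : 0 ≤ f')
    (htangent : ∀ x : ℝ, 0 < x → f x ≥ f x₀ + f' * (x - x₀))
    (x : Fin n → ℝ) (hx : ∀ j, 0 < x j)
    (hconstraint : ∏ j, x j = x₀ ^ n) :
    ∑ j, f (x j) ≥ n * f x₀ := by
  have hn0 : (0:ℝ) < n := by positivity
  -- AM-GM: x₀ ≤ (1/n) ∑ x j
  have hamgm := Real.geom_mean_le_arith_mean_weighted Finset.univ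
    (fun _ : Fin n => 1 / (n:ℝ)) x (fun i _ => by positivity)
    (by simp [Finset.card_univ]; field_simp) (fun i _ => (hx i).le)
  have hprod : (∏ j, x j ^ (1 / (n:ℝ))) = x₀ := by
    rw [Real.finset_prod_rpow _ _ (fun i _ => (hx i).le)]
    rw [hconstraint, ← Real.rpow_natCast x₀ n, ← Real.rpow_mul hx₀.le]
    rw [mul_one_div, div_self (ne_of_gt hn0), Real.rpow_one]
  have hsum : (n:ℝ) * x₀ ≤ ∑ j, x j := by
    rw [hprod] at hamgm
    have : ∑ j, 1 / (n:ℝ) * x j = (1/(n:ℝ)) * ∑ j, x j := by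
      rw [Finset.mul_sum]
    rw [this] at hamgm
    have h2 := mul_le_mul_of_nonneg_left hamgm hn0.le
    rw [← mul_assoc, mul_one_div, div_self (ne_of_gt hn0), one_mul] at h2
    exact h2
  have key : ∑ j, f (x j) ≥ ∑ j, (f x₀ + f' * (x j - x₀)) :=
    Finset.sum_le_sum fun j _ => htangent (x j) (hx j)
  have : ∑ j, (f x₀ + f' * (x j - x₀))
      = n * f x₀ + f' * (∑ j, x j - n * x₀) := by
    simp [Finset.sum_add_distrib, Finset.mul_sum, Finset.sum_sub_distrib,
      mul_sub, Finset.mul_sum]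
    ring
  nlinarith [mul_nonneg hsign (sub_nonneg.mpr hsum)]
end

section
/- Let α be a nonzero real number, x₀ a positive real number, and n ≥ 2 a natural number. Let f be a function defined on the positive reals and differentiable at x₀. Suppose (α − 1)·f'(x₀) ≥ 0 and for every positive real x with x < n·x₀ one has f(x) ≥ (f'(x₀)/(α·x₀^(α−1)))·(x^α − x₀^α) + f(x₀). Then for all positive reals x₁, …, xₙ with x₁ + ⋯ + xₙ = n·x₀, one has f(x₁) + ⋯ + f(xₙ) ≥ n·f(x₀). -/
/-!
By the tangent line trick it suffices that `f` lies above its tangent line at `x₀` on `(0, n x₀)`,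
since the tangent line terms sum to `n f(x₀)` under the constraint. The tangent power curve `g`
lies above that tangent line: Bernoulli's inequality says that `x ^ α` minus its tangent line at
`x₀` has the sign of `α (α - 1)`, and the hypothesis `(α - 1) f'(x₀) ≥ 0` gives the leading
coefficient of `g` the same sign.
-/

open Real

theorem one_add_mul_self_le_rpow_one_add_of_nonpos {s : ℝ} (hs : -1 < s) {p : ℝ} (hp : p ≤ 0) :
    1 + p * s ≤ (1 + s) ^ p := by
  have hu : 0 < 1 + s := by linarith
  have hq : 0 < 1 - p := by linarith
  -- weighted AM-GM for `(1 + s) ^ p` and `1 + s` with weights `1 / (1 - p)` and `-p / (1 - p)`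
  have amgm := geom_mean_le_arith_mean2_weighted (p₁ := (1 + s) ^ p) (p₂ := 1 + s)
    (div_nonneg zero_le_one hq.le) (div_nonneg (neg_nonneg.2 hp) hq.le) (by positivity) hu.le
    (by field_simp; ring)
  rw [← rpow_mul hu.le, ← rpow_add hu, mul_one_div, ← add_div, add_neg_cancel, zero_div,
    rpow_zero] at amgm
  rw [div_mul_eq_mul_div, div_mul_eq_mul_div, ← add_div, le_div_iff₀ hq] at amgm
  linarith

theorem mul_sub_one_mul_rpow_one_add_sub_nonneg {s : ℝ} (hs : -1 < s) (p : ℝ) :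
    0 ≤ p * (p - 1) * ((1 + s) ^ p - (1 + p * s)) := by
  rcases le_or_gt 1 p with hp1 | hp1
  · have := one_add_mul_self_le_rpow_one_add hs.le hp1
    exact mul_nonneg (mul_nonneg (by linarith) (by linarith)) (by linarith)
  rcases le_or_gt 0 p with hp0 | hp0
  · have := rpow_one_add_le_one_add_mul_self hs.le hp0 hp1.le
    exact mul_nonneg_of_nonpos_of_nonpos
      (mul_nonpos_of_nonneg_of_nonpos hp0 (by linarith)) (by linarith)
  · have := one_add_mul_self_le_rpow_one_add_of_nonpos hs hp0.le
    exact mul_nonneg (mul_nonneg_of_nonpos_of_nonpos hp0.le (by linarith)) (by linarith)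

theorem mul_sub_one_mul_rpow_sub_tangent_nonneg {x₀ t : ℝ} (hx₀ : 0 < x₀) (ht : 0 < t) (p : ℝ) :
    0 ≤ p * (p - 1) * (t ^ p - (x₀ ^ p + p * x₀ ^ (p - 1) * (t - x₀))) := by
  have hs : -1 < t / x₀ - 1 := by linarith [div_pos ht hx₀]
  have key := mul_sub_one_mul_rpow_one_add_sub_nonneg hs p
  have hxp : 0 < x₀ ^ p := rpow_pos_of_pos hx₀ p
  have h : t ^ p - (x₀ ^ p + p * x₀ ^ (p - 1) * (t - x₀)) =
      x₀ ^ p * ((1 + (t / x₀ - 1)) ^ p - (1 + p * (t / x₀ - 1))) := by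
    rw [add_sub_cancel, div_rpow ht.le hx₀.le, rpow_sub_one hx₀.ne']
    field_simp
  rw [h, mul_left_comm]
  exact mul_nonneg hxp.le key

/-- The supporting curve `g` of the paper, with `y₀ = f x₀` and `d = f' x₀`. -/
noncomputable def tangentPow (α x₀ y₀ d x : ℝ) : ℝ :=
  d / (α * x₀ ^ (α - 1)) * (x ^ α - x₀ ^ α) + y₀

theorem tangentLine_le_tangentPow {α x₀ t : ℝ} (hα : α ≠ 0) (hx₀ : 0 < x₀) (ht : 0 < t)
    (y₀ : ℝ) {d : ℝ} (hd : 0 ≤ (α - 1) * d) :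
    y₀ + d * (t - x₀) ≤ tangentPow α x₀ y₀ d t := by
  set c := d / (α * x₀ ^ (α - 1))
  have hxp : 0 < x₀ ^ (α - 1) := rpow_pos_of_pos hx₀ _
  have hdc : d = c * (α * x₀ ^ (α - 1)) := by
    rw [div_mul_cancel₀ _ (mul_ne_zero hα hxp.ne')]
  have hc : 0 ≤ α * (α - 1) * c :=
    nonneg_of_mul_nonneg_right (by rw [hdc] at hd; linarith) hxp
  have hR := mul_sub_one_mul_rpow_sub_tangent_nonneg hx₀ ht α
  set R := t ^ α - (x₀ ^ α + α * x₀ ^ (α - 1) * (t - x₀))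
  -- `c` and the remainder `R` both have the sign of `α (α - 1)`
  have hcR : 0 ≤ c * R := by
    rcases eq_or_ne α 1 with rfl | hα1
    · simp [R]
    have hk : 0 < (α * (α - 1)) ^ 2 := by positivity
    exact nonneg_of_mul_nonneg_right (by nlinarith [mul_nonneg hc hR]) hk
  unfold tangentPow
  nlinarith

theorem lt_sum_of_one_lt_card {ι : Type*} [Fintype ι] {x : ι → ℝ} (hx : ∀ j, 0 < x j)
    (hι : 1 < Fintype.card ι) (j : ι) : x j < ∑ k, x k := by
  classical
  obtain ⟨i, hij⟩ := Fintype.exists_ne_of_one_lt_card hι j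
  rw [← Finset.add_sum_erase _ _ (Finset.mem_univ j), lt_add_iff_pos_right]
  exact Finset.sum_pos' (fun k _ => (hx k).le) ⟨i, by simp [hij], hx i⟩

theorem card_mul_le_sum_of_tangentLine_le {ι : Type*} [Fintype ι] {f : ℝ → ℝ} {x₀ d : ℝ}
    {x : ι → ℝ} (hsum : ∑ j, x j = Fintype.card ι * x₀)
    (htangent : ∀ j, f x₀ + d * (x j - x₀) ≤ f (x j)) :
    Fintype.card ι * f x₀ ≤ ∑ j, f (x j) := by
  calc (Fintype.card ι : ℝ) * f x₀ = ∑ j, (f x₀ + d * (x j - x₀)) := by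
        rw [Finset.sum_add_distrib, ← Finset.mul_sum, Finset.sum_sub_distrib, hsum]
        simp
    _ ≤ ∑ j, f (x j) := Finset.sum_le_sum fun j _ => htangent j

theorem stmt_17_general (α : ℝ) (hα : α ≠ 0) (x₀ : ℝ) (hx₀ : 0 < x₀) (n : ℕ) (hn : 2 ≤ n)
    (f : ℝ → ℝ) (f' : ℝ)
    (hsign : 0 ≤ (α - 1) * f')
    (htangent : ∀ x : ℝ, 0 < x → x < n * x₀ →
      f x ≥ (f' / (α * x₀ ^ (α - 1))) * (x ^ α - x₀ ^ α) + f x₀)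
    (x : Fin n → ℝ) (hx : ∀ j, 0 < x j)
    (hconstraint : ∑ j, x j = n * x₀) :
    ∑ j, f (x j) ≥ n * f x₀ := by
  have hsum : ∑ j, x j = Fintype.card (Fin n) * x₀ := by rw [Fintype.card_fin, hconstraint]
  have hlt (j : Fin n) : x j < n * x₀ := hconstraint ▸ lt_sum_of_one_lt_card hx (by rw [Fintype.card_fin]; omega) j
  have hline (j : Fin n) : f x₀ + f' * (x j - x₀) ≤ f (x j) :=
    calc f x₀ + f' * (x j - x₀) ≤ tangentPow α x₀ (f x₀) f' (x j) :=
          tangentLine_le_tangentPow hα hx₀ (hx j) (f x₀) hsign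
      _ ≤ f (x j) := htangent (x j) (hx j) (hlt j)
  simpa using card_mul_le_sum_of_tangentLine_le hsum hline

theorem stmt_17 (α : ℝ) (hα : α ≠ 0) (x₀ : ℝ) (hx₀ : 0 < x₀) (n : ℕ) (hn : 2 ≤ n)
    (f : ℝ → ℝ) (f' : ℝ) (hf : HasDerivAt f f' x₀)
    (hsign : 0 ≤ (α - 1) * f')
    (htangent : ∀ x : ℝ, 0 < x → x < n * x₀ →
      f x ≥ (f' / (α * x₀ ^ (α - 1))) * (x ^ α - x₀ ^ α) + f x₀)
    (x : Fin n → ℝ) (hx : ∀ j, 0 < x j)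
    (hconstraint : ∑ j, x j = n * x₀) :
    ∑ j, f (x j) ≥ n * f x₀ :=
  stmt_17_general α hα x₀ hx₀ n hn f f' hsign htangent x hx hconstraint
end

section
/- Let P(x) = ax³ + bx² + cx + d be a cubic polynomial with real coefficients and a ≠ 0, let n be a positive natural number, and let x₀ be a positive real number. If 2a·x₀ + b ≥ 0 and (n + 2)·a·x₀ + b ≥ 0, then for all nonnegative real numbers x₁, …, xₙ with x₁ + ⋯ + xₙ = n·x₀, one has P(x₁) + ⋯ + P(xₙ) ≥ n·P(x₀). -/
/-!
Write `P x = P x₀ + P'(x₀) (x - x₀) + (x - x₀)² (a x + 2 a x₀ + b)`. The linear terms cancel in the sum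
because the `xⱼ` average to `x₀`, so it suffices that the affine factor `a x + 2 a x₀ + b` is nonnegative.
Every `xⱼ` lies in `[0, n x₀]`, and at the two endpoints that factor is `2 a x₀ + b` and
`(n + 2) a x₀ + b`, both nonnegative by hypothesis.
-/

open Finset

theorem Finset.card_mul_le_sum_of_le_tangent {ι : Type*} (s : Finset ι) (f : ℝ → ℝ) (x : ι → ℝ)
    (x₀ m : ℝ) (htan : ∀ i ∈ s, f x₀ + m * (x i - x₀) ≤ f (x i))
    (hsum : ∑ i ∈ s, x i = #s * x₀) :
    #s * f x₀ ≤ ∑ i ∈ s, f (x i) :=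
  calc (#s : ℝ) * f x₀ = ∑ i ∈ s, (f x₀ + m * (x i - x₀)) := by
        rw [sum_add_distrib, ← mul_sum, sum_sub_distrib, hsum]
        simp only [sum_const, nsmul_eq_mul]
        ring
    _ ≤ ∑ i ∈ s, f (x i) := sum_le_sum htan

theorem mul_add_nonneg_of_endpoints {α β t L : ℝ} (ht : 0 ≤ t) (htL : t ≤ L)
    (h0 : 0 ≤ β) (hL : 0 ≤ α * L + β) : 0 ≤ α * t + β := by
  rcases le_total 0 α with hα | hα
  · nlinarith
  · nlinarith

theorem cubic_eq_tangent_add (a b c d x₀ x : ℝ) :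
    a * x ^ 3 + b * x ^ 2 + c * x + d =
      (a * x₀ ^ 3 + b * x₀ ^ 2 + c * x₀ + d) + (3 * a * x₀ ^ 2 + 2 * b * x₀ + c) * (x - x₀)
        + (x - x₀) ^ 2 * (a * x + (2 * a * x₀ + b)) := by
  ring

theorem cubic_tangent_le {a b c d x₀ x L : ℝ} (hx : 0 ≤ x) (hxL : x ≤ L)
    (h0 : 0 ≤ 2 * a * x₀ + b) (hL : 0 ≤ a * L + (2 * a * x₀ + b)) :
    (a * x₀ ^ 3 + b * x₀ ^ 2 + c * x₀ + d) + (3 * a * x₀ ^ 2 + 2 * b * x₀ + c) * (x - x₀)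
      ≤ a * x ^ 3 + b * x ^ 2 + c * x + d := by
  rw [cubic_eq_tangent_add a b c d x₀ x, le_add_iff_nonneg_right]
  exact mul_nonneg (sq_nonneg _) (mul_add_nonneg_of_endpoints hx hxL h0 hL)

theorem stmt_18_general (a b c d : ℝ) (n : ℕ) (x₀ : ℝ)
    (h1 : 2*a*x₀ + b ≥ 0) (h2 : (n + 2)*a*x₀ + b ≥ 0)
    (x : Fin n → ℝ) (hx : ∀ j, 0 ≤ x j) (hsum : ∑ j, x j = n * x₀) :
    ∑ j, (a*(x j)^3 + b*(x j)^2 + c*(x j) + d) ≥ n * (a*x₀^3 + b*x₀^2 + c*x₀ + d) := by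
  have hle : ∀ j, x j ≤ n * x₀ := fun j =>
    hsum ▸ single_le_sum (fun i _ => hx i) (mem_univ j)
  have hL : 0 ≤ a * (n * x₀) + (2 * a * x₀ + b) := by linarith
  have hjensen := card_mul_le_sum_of_le_tangent univ
    (fun t => a * t ^ 3 + b * t ^ 2 + c * t + d) x x₀ (3 * a * x₀ ^ 2 + 2 * b * x₀ + c)
    (fun j _ => cubic_tangent_le (hx j) (hle j) h1 hL)
    (by simpa using hsum)
  simpa using hjensen

theorem stmt_18 (a b c d : ℝ) (ha : a ≠ 0) (n : ℕ) (hn : 0 < n) (x₀ : ℝ) (hx₀ : 0 < x₀)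
    (h1 : 2*a*x₀ + b ≥ 0) (h2 : (n + 2)*a*x₀ + b ≥ 0)
    (x : Fin n → ℝ) (hx : ∀ j, 0 ≤ x j) (hsum : ∑ j, x j = n * x₀) :
    ∑ j, (a*(x j)^3 + b*(x j)^2 + c*(x j) + d) ≥ n * (a*x₀^3 + b*x₀^2 + c*x₀ + d) :=
  stmt_18_general a b c d n x₀ h1 h2 x hx hsum
end
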